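/- arXiv:2309.12915 — 3 statements merged into one kernel-verified Lean document; each statement's English description precedes it below -/
import Mathlib

section
/- Let G be a group acting transitively on a countable set Q, let x₀ ∈ Q, and let G_{x₀} be its stabilizer. Let π be the representation of G on ℓ¹₀Q given by (π(g)f)(q) = f(g⁻¹q) (each π(g) is an isometry of ℓ¹₀Q), let β : G → ℓ¹₀Q be the coboundary β(g) = δ_{x₀} − δ_{g·x₀}, and suppose α : G → ℓ¹₀Q satisfies α(1) = 0, α(gh) = α(g) for all g ∈ G and h ∈ G_{x₀}, and is a quasi-cocycle for π, i.e. Δ(α) = sup_{g,g'∈G} ‖α(gg') − α(g) − π(g)α(g')‖ < ∞. Then there exists a representation Π of G on ℓ¹₀Q ⊕₁ ℓ¹₀Q by bounded operators with ‖Π(g)‖_op ≤ 1 + Δ(α) for all g ∈ G, such that ζ(g) = (α(g), β(g)) is a cocycle for Π, i.e. ζ(gh) = ζ(g) + Π(g)ζ(h) for all g,h ∈ G. -/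
/-!
Choose `s q ∈ G` with `s q • x₀ = q` and let `T g f = ∑ q, f q • c g (s q)` on `ℓ¹₀Q`,
where `c g h = α (g h) - α g - π g (α h)` is the defect of `α`; then `‖T g‖ ≤ Δ`.
Invariance of `α` under the stabilizer gives `c g (s (h • x₀)) = c g h`, and the identity
`c (g h) k = π g (c h k) + c g (h k) - c g h` shows that `T (g h) - π g T h - T g π h` is
a multiple of the sum functional, hence zero on `ℓ¹₀Q`: `T` is a derivation. So
`Π g = [[π g, -T g], [0, π g]]` is a representation on `ℓ¹₀Q ⊕₁ ℓ¹₀Q` of norm at most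
`1 + Δ`, and `T g (β h) = c g 1 - c g h = -c g h` is exactly what makes `(α, β)` a cocycle.
-/

open scoped ENNReal

/-- Any element of `ℓ¹Q` is summable. -/
theorem l1summable {Q : Type*} (f : lp (fun _ : Q => ℝ) 1) : Summable fun q : Q => f q := by
  have h := (lp.memℓp f).summable (p := 1) (by norm_num)
  simp only [ENNReal.toReal_one, Real.rpow_one] at h
  exact h.of_norm

/-- `ℓ¹₀Q`, the subspace of zero-sum elements of `ℓ¹Q`. -/
noncomputable def l1zero (Q : Type*) : Submodule ℝ (lp (fun _ : Q => ℝ) 1) where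
  carrier := {f | ∑' q : Q, f q = 0}
  add_mem' := by
    intro f g hf hg
    simp only [Set.mem_setOf_eq] at *
    have hpt : ∀ q : Q, (f + g) q = f q + g q := fun q => by
      rw [lp.coeFn_add]; rfl
    rw [tsum_congr hpt, (l1summable f).tsum_add (l1summable g), hf, hg, add_zero]
  zero_mem' := by
    simp only [Set.mem_setOf_eq]
    have hpt : ∀ q : Q, (0 : lp (fun _ : Q => ℝ) 1) q = 0 := fun q => by
      rw [lp.coeFn_zero]; rfl
    rw [tsum_congr hpt, tsum_zero]
  smul_mem' := by
    intro c f hf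
    simp only [Set.mem_setOf_eq] at *
    have hpt : ∀ q : Q, (c • f) q = c * f q := fun q => by
      rw [lp.coeFn_smul]; rfl
    rw [tsum_congr hpt, tsum_mul_left, hf, mul_zero]

open scoped lp

instance (Q : Type*) : CompleteSpace (l1zero Q) := by
  have : IsClosed {f : ℓ¹(Q, ℝ) | lp.tsumCLM ℝ Q ℝ f = 0} :=
    isClosed_eq (lp.tsumCLM ℝ Q ℝ).continuous continuous_const
  exact this.completeSpace_coe

section TsumSmul

variable {Q E : Type*} [NormedAddCommGroup E] [NormedSpace ℝ E]

lemma lp.norm_eq_tsum_norm_of_one (f : ℓ¹(Q, ℝ)) : ‖f‖ = ∑' q, ‖f q‖ := by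
  rw [lp.norm_eq_tsum_rpow (by norm_num)]
  simp

lemma lp.summable_norm_of_one (f : ℓ¹(Q, ℝ)) : Summable fun q => ‖f q‖ := by
  simpa using (lp.memℓp f).summable (p := 1) (by norm_num)

variable {d : Q → E} {C : ℝ}

lemma summable_norm_smul_of_norm_le (hd : ∀ q, ‖d q‖ ≤ C) (f : ℓ¹(Q, ℝ)) :
    Summable fun q => ‖f q • d q‖ :=
  ((lp.summable_norm_of_one f).mul_right C).of_nonneg_of_le (fun _ => norm_nonneg _)
    fun q => by rw [norm_smul]; exact mul_le_mul_of_nonneg_left (hd q) (norm_nonneg _)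

lemma norm_tsum_smul_le (hd : ∀ q, ‖d q‖ ≤ C) (f : ℓ¹(Q, ℝ)) :
    ‖∑' q, f q • d q‖ ≤ C * ‖f‖ :=
  calc ‖∑' q, f q • d q‖ ≤ ∑' q, ‖f q‖ * C := by
        refine tsum_of_norm_bounded ((lp.summable_norm_of_one f).mul_right C).hasSum
          fun q => ?_
        rw [norm_smul]; exact mul_le_mul_of_nonneg_left (hd q) (norm_nonneg _)
    _ = C * ‖f‖ := by rw [tsum_mul_right, lp.norm_eq_tsum_norm_of_one, mul_comm]

variable [CompleteSpace E]

noncomputable def tsumSmulCLM (d : Q → E) (hd : ∀ q, ‖d q‖ ≤ C) : ℓ¹(Q, ℝ) →L[ℝ] E :=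
  LinearMap.mkContinuous
    { toFun f := ∑' q, f q • d q
      map_add' f g := by
        simp only [lp.coeFn_add, Pi.add_apply, add_smul]
        exact (summable_norm_smul_of_norm_le hd f).of_norm.tsum_add
          (summable_norm_smul_of_norm_le hd g).of_norm
      map_smul' c f := by
        simp only [lp.coeFn_smul, Pi.smul_apply, smul_eq_mul, mul_smul, RingHom.id_apply]
        exact (summable_norm_smul_of_norm_le hd f).of_norm.tsum_const_smul c }
    C (norm_tsum_smul_le hd)

variable (hd : ∀ q, ‖d q‖ ≤ C)

lemma tsumSmulCLM_apply (f : ℓ¹(Q, ℝ)) : tsumSmulCLM d hd f = ∑' q, f q • d q := rfl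

lemma tsumSmulCLM_single [DecidableEq Q] (q : Q) :
    tsumSmulCLM d hd (lp.single 1 q 1) = d q := by
  rw [tsumSmulCLM_apply,
    tsum_eq_single q fun q' hq' => by rw [lp.single_apply_ne _ _ _ hq', zero_smul],
    lp.single_apply_self, one_smul]

end TsumSmul

section UpperTriangular

variable {E F : Type*} [NormedAddCommGroup E] [NormedSpace ℝ E] [NormedAddCommGroup F]
  [NormedSpace ℝ F]

/-- The block matrix `[[A, -C], [0, B]]` acting on `E ⊕₁ F`. -/
noncomputable def upperTriangular (A : E →L[ℝ] E) (C : F →L[ℝ] E) (B : F →L[ℝ] F) :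
    WithLp 1 (E × F) →L[ℝ] WithLp 1 (E × F) :=
  (WithLp.prodContinuousLinearEquiv 1 ℝ E F).symm.toContinuousLinearMap ∘L
    ((A ∘L WithLp.fstL 1 ℝ E F - C ∘L WithLp.sndL 1 ℝ E F).prod
      (B ∘L WithLp.sndL 1 ℝ E F))

variable (A A' : E →L[ℝ] E) (C C' : F →L[ℝ] E) (B B' : F →L[ℝ] F)

@[simp]
lemma upperTriangular_apply (x : WithLp 1 (E × F)) :
    upperTriangular A C B x = WithLp.toLp 1 (A x.fst - C x.snd, B x.snd) := rfl

lemma upperTriangular_one_zero_one :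
    upperTriangular (1 : E →L[ℝ] E) 0 (1 : F →L[ℝ] F) = 1 := by
  ext x : 1
  simp
  rfl

lemma upperTriangular_comp :
    upperTriangular A C B ∘L upperTriangular A' C' B'
      = upperTriangular (A ∘L A') (A ∘L C' + C ∘L B') (B ∘L B') := by
  ext x : 1
  simp [sub_sub]

lemma norm_upperTriangular_le :
    ‖upperTriangular A C B‖ ≤ max ‖A‖ (‖C‖ + ‖B‖) := by
  refine ContinuousLinearMap.opNorm_le_bound _ (by positivity) fun x => ?_
  rw [WithLp.prod_norm_eq_of_L1, WithLp.prod_norm_eq_of_L1, upperTriangular_apply,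
    WithLp.toLp_fst, WithLp.toLp_snd]
  calc ‖A x.fst - C x.snd‖ + ‖B x.snd‖ ≤ ‖A‖ * ‖x.fst‖ + (‖C‖ + ‖B‖) * ‖x.snd‖ := by
        have := norm_sub_le (A x.fst) (C x.snd)
        have := A.le_opNorm x.fst
        have := C.le_opNorm x.snd
        have := B.le_opNorm x.snd
        linarith
    _ ≤ max ‖A‖ (‖C‖ + ‖B‖) * (‖x.fst‖ + ‖x.snd‖) := by
        rw [mul_add]
        gcongr
        exacts [le_max_left _ _, le_max_right _ _]

end UpperTriangular

lemma apply_one_eq_zero_of_derivation {G E F : Type*} [Group G] [NormedAddCommGroup E]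
    [NormedSpace ℝ E] [NormedAddCommGroup F] [NormedSpace ℝ F]
    {π : G → E →L[ℝ] E} {σ : G → F →L[ℝ] F}
    {T : G → F →L[ℝ] E} (hπ1 : π 1 = 1) (hσ1 : σ 1 = 1)
    (hT : ∀ g h, T (g * h) = π g ∘L T h + T g ∘L σ h) : T 1 = 0 := by
  simpa [hπ1, hσ1, ContinuousLinearMap.one_def] using hT 1 1

section Defect

variable {G E : Type*} [Group G] [NormedAddCommGroup E] [NormedSpace ℝ E]
  (ρ : G → E →L[ℝ] E) (α : G → E)

def cocycleDefect (g h : G) : E := α (g * h) - α g - ρ g (α h)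

variable {ρ α}

lemma cocycleDefect_mul_left (hρ : ∀ g h, ρ (g * h) = ρ g ∘L ρ h) (g h k : G) :
    cocycleDefect ρ α (g * h) k
      = ρ g (cocycleDefect ρ α h k) + cocycleDefect ρ α g (h * k) - cocycleDefect ρ α g h := by
  simp only [cocycleDefect, hρ, ContinuousLinearMap.comp_apply, map_sub, mul_assoc]
  abel

lemma cocycleDefect_mul_mem {H : Subgroup G} (hα : ∀ g, ∀ k ∈ H, α (g * k) = α g)
    (g h k : G) (hk : k ∈ H) : cocycleDefect ρ α g (h * k) = cocycleDefect ρ α g h := by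
  rw [cocycleDefect, cocycleDefect, ← mul_assoc, hα _ k hk, hα h k hk]

lemma cocycleDefect_one_right (hα1 : α 1 = 0) (g : G) : cocycleDefect ρ α g 1 = 0 := by
  simp [cocycleDefect, hα1]

lemma zero_le_of_norm_cocycleDefect_le {Δ : ℝ} (hΔ : ∀ g h, ‖cocycleDefect ρ α g h‖ ≤ Δ) :
    0 ≤ Δ :=
  (norm_nonneg _).trans (hΔ 1 1)

end Defect

section DefectOperator

variable (G : Type*) {Q E : Type*} [Group G] [MulAction G Q] [MulAction.IsPretransitive G Q]

noncomputable def orbitSection (x₀ q : Q) : G := (MulAction.exists_smul_eq G x₀ q).choose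

variable {G}

lemma orbitSection_smul (x₀ q : Q) : orbitSection G x₀ q • x₀ = q :=
  (MulAction.exists_smul_eq G x₀ q).choose_spec

variable [NormedAddCommGroup E] [NormedSpace ℝ E] {ρ : G → E →L[ℝ] E} {α : G → E} (x₀ : Q)

lemma cocycleDefect_orbitSection (hα : ∀ g, ∀ k ∈ MulAction.stabilizer G x₀, α (g * k) = α g)
    (g h : G) : cocycleDefect ρ α g (orbitSection G x₀ (h • x₀)) = cocycleDefect ρ α g h := by
  have hk : h⁻¹ * orbitSection G x₀ (h • x₀) ∈ MulAction.stabilizer G x₀ := by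
    rw [MulAction.mem_stabilizer_iff, mul_smul, orbitSection_smul, inv_smul_smul]
  rw [← cocycleDefect_mul_mem hα g h _ hk, mul_inv_cancel_left]

variable [CompleteSpace E] {Δ : ℝ}

noncomputable def defectOperator (hΔ : ∀ g h, ‖cocycleDefect ρ α g h‖ ≤ Δ) (g : G) :
    l1zero Q →L[ℝ] E :=
  tsumSmulCLM (fun q => cocycleDefect ρ α g (orbitSection G x₀ q)) (fun _ => hΔ g _) ∘L
    (l1zero Q).subtypeL

variable (hΔ : ∀ g h, ‖cocycleDefect ρ α g h‖ ≤ Δ)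

lemma defectOperator_apply (g : G) (f : l1zero Q) :
    defectOperator x₀ hΔ g f
      = ∑' q, (f : ℓ¹(Q, ℝ)) q • cocycleDefect ρ α g (orbitSection G x₀ q) :=
  rfl

lemma norm_defectOperator_le (g : G) : ‖defectOperator x₀ hΔ g‖ ≤ Δ :=
  ContinuousLinearMap.opNorm_le_bound _ (zero_le_of_norm_cocycleDefect_le hΔ) fun f =>
    norm_tsum_smul_le (fun _ => hΔ g _) (f : ℓ¹(Q, ℝ))

variable {σ : G → l1zero Q →L[ℝ] l1zero Q}

lemma defectOperator_mul (hρ : ∀ g h, ρ (g * h) = ρ g ∘L ρ h)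
    (hα : ∀ g, ∀ k ∈ MulAction.stabilizer G x₀, α (g * k) = α g)
    (hσ : ∀ g (f : l1zero Q) q, (σ g f : ℓ¹(Q, ℝ)) q = (f : ℓ¹(Q, ℝ)) (g⁻¹ • q)) (g h : G) :
    defectOperator x₀ hΔ (g * h)
      = ρ g ∘L defectOperator x₀ hΔ h + defectOperator x₀ hΔ g ∘L σ h := by
  ext f
  set c : G → Q → E := fun g q => cocycleDefect ρ α g (orbitSection G x₀ q)
  set F : ℓ¹(Q, ℝ) := ↑f
  set D := cocycleDefect ρ α g h
  have hc : ∀ q, F q • c (g * h) q = ρ g (F q • c h q) + F q • c g (h • q) - F q • D := by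
    intro q
    have hq : h • q = (h * orbitSection G x₀ q) • x₀ := by rw [mul_smul, orbitSection_smul]
    simp only [c]
    rw [cocycleDefect_mul_left hρ, hq, cocycleDefect_orbitSection x₀ hα, smul_sub, smul_add,
      map_smul]
  have hs_h : Summable fun q => F q • c h q :=
    (summable_norm_smul_of_norm_le (fun _ => hΔ h _) F).of_norm
  have hs_g : Summable fun q => F q • c g (h • q) :=
    (summable_norm_smul_of_norm_le (fun _ => hΔ g _) F).of_norm
  have hreindex : defectOperator x₀ hΔ g (σ h f) = ∑' q, F q • c g (h • q) := by
    rw [defectOperator_apply]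
    simp_rw [hσ]
    exact (Equiv.tsum_eq (MulAction.toPerm h) (fun q => F (h⁻¹ • q) • c g q)).symm.trans
      (by simp [F])
  calc defectOperator x₀ hΔ (g * h) f
      = ∑' q, (ρ g (F q • c h q) + F q • c g (h • q) - F q • D) := tsum_congr hc
    _ = ρ g (∑' q, F q • c h q) + ∑' q, F q • c g (h • q) - (∑' q, F q) • D := by
      rw [Summable.tsum_sub ((ρ g).summable hs_h |>.add hs_g) ((l1summable F).smul_const D),
        Summable.tsum_add ((ρ g).summable hs_h) hs_g, (ρ g).map_tsum hs_h,
        (l1summable F).tsum_smul_const]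
    _ = _ := by
      -- the constant defect term is killed because `f` has zero sum
      rw [show ∑' q, F q = 0 from f.2, zero_smul, sub_zero, ← hreindex]
      rfl

lemma defectOperator_apply_of_coe_eq_sub_single [DecidableEq Q] (hα1 : α 1 = 0)
    (hα : ∀ g, ∀ k ∈ MulAction.stabilizer G x₀, α (g * k) = α g) (g h : G) (f : l1zero Q)
    (hf : (f : ℓ¹(Q, ℝ)) = lp.single 1 x₀ 1 - lp.single 1 (h • x₀) 1) :
    defectOperator x₀ hΔ g f = -cocycleDefect ρ α g h := by
  have hx₀ := cocycleDefect_orbitSection (ρ := ρ) x₀ hα g 1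
  rw [one_smul, cocycleDefect_one_right hα1] at hx₀
  rw [defectOperator, ContinuousLinearMap.comp_apply, Submodule.subtypeL_apply, hf, map_sub,
    tsumSmulCLM_single, tsumSmulCLM_single, hx₀, cocycleDefect_orbitSection x₀ hα, zero_sub]

end DefectOperator

lemma lp.single_apply_inv_smul {G Q E : Type*} [Group G] [MulAction G Q] [DecidableEq Q]
    [NormedAddCommGroup E] (p : ℝ≥0∞) (g : G) (q q' : Q) (a : E) :
    lp.single (E := fun _ : Q => E) p q a (g⁻¹ • q')
      = lp.single (E := fun _ : Q => E) p (g • q) a q' := by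
  simp only [lp.single_apply, Pi.single_apply, inv_smul_eq_iff]

lemma map_mul_of_coe_eq_sub_single {G Q : Type*} [Group G] [MulAction G Q] [DecidableEq Q]
    {x₀ : Q} {σ : G → l1zero Q →L[ℝ] l1zero Q}
    (hσ : ∀ g (f : l1zero Q) q, (σ g f : ℓ¹(Q, ℝ)) q = (f : ℓ¹(Q, ℝ)) (g⁻¹ • q))
    {β : G → l1zero Q}
    (hβ : ∀ g, (β g : ℓ¹(Q, ℝ)) = lp.single 1 x₀ 1 - lp.single 1 (g • x₀) 1) (g h : G) :
    β (g * h) = β g + σ g (β h) := by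
  ext q
  simp only [Submodule.coe_add, lp.coeFn_add, Pi.add_apply, hσ, hβ, lp.coeFn_sub, Pi.sub_apply,
    lp.single_apply_inv_smul, mul_smul]
  abel

theorem exists_unifBounded_rep_with_cocycle_general {G Q : Type*} [Group G]
    [DecidableEq Q] [MulAction G Q] [MulAction.IsPretransitive G Q] (x₀ : Q)
    (π : G → (↥(l1zero Q) →L[ℝ] ↥(l1zero Q)))
    (hπ1 : π 1 = 1) (hπmul : ∀ g h : G, π (g * h) = π g ∘L π h)
    (hπpt : ∀ (g : G) (f : ↥(l1zero Q)) (q : Q),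
      ((π g f : ↥(l1zero Q)) : lp (fun _ : Q => ℝ) 1) q
        = (f : lp (fun _ : Q => ℝ) 1) (g⁻¹ • q))
    (hπiso : ∀ (g : G) (f : ↥(l1zero Q)), ‖π g f‖ = ‖f‖)
    (β : G → ↥(l1zero Q))
    (hβ : ∀ g : G, (β g : lp (fun _ : Q => ℝ) 1)
      = lp.single 1 x₀ (1 : ℝ) - lp.single 1 (g • x₀) (1 : ℝ))
    (α : G → ↥(l1zero Q)) (hα1 : α 1 = 0)
    (hαstab : ∀ g h : G, h ∈ MulAction.stabilizer G x₀ → α (g * h) = α g)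
    (Δ : ℝ) (hΔ : ∀ g g' : G, ‖α (g * g') - α g - π g (α g')‖ ≤ Δ) :
    ∃ P : G → (WithLp 1 (↥(l1zero Q) × ↥(l1zero Q)) →L[ℝ]
        WithLp 1 (↥(l1zero Q) × ↥(l1zero Q))),
      P 1 = 1 ∧ (∀ g h : G, P (g * h) = P g ∘L P h) ∧
      (∀ g : G, ‖P g‖ ≤ 1 + Δ) ∧
      (∀ g h : G,
        (WithLp.equiv 1 (↥(l1zero Q) × ↥(l1zero Q))).symm (α (g * h), β (g * h))
          = (WithLp.equiv 1 (↥(l1zero Q) × ↥(l1zero Q))).symm (α g, β g)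
            + P g ((WithLp.equiv 1 (↥(l1zero Q) × ↥(l1zero Q))).symm (α h, β h))) := by
  replace hΔ : ∀ g h, ‖cocycleDefect π α g h‖ ≤ Δ := hΔ
  set T := defectOperator x₀ hΔ
  have hT : ∀ g h, T (g * h) = π g ∘L T h + T g ∘L π h :=
    defectOperator_mul x₀ hΔ hπmul hαstab hπpt
  refine ⟨fun g => upperTriangular (π g) (T g) (π g), ?_, fun g h => ?_, fun g => ?_,
    fun g h => ?_⟩
  · dsimp only
    rw [apply_one_eq_zero_of_derivation hπ1 hπ1 hT, hπ1]
    exact upperTriangular_one_zero_one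
  · dsimp only
    rw [upperTriangular_comp, hπmul, hT]
  · have hπg : ‖π g‖ ≤ 1 :=
      ContinuousLinearMap.opNorm_le_bound _ zero_le_one fun f => by rw [hπiso, one_mul]
    calc _ ≤ max ‖π g‖ (‖T g‖ + ‖π g‖) := norm_upperTriangular_le _ _ _
      _ ≤ 1 + Δ := max_le (by linarith [zero_le_of_norm_cocycleDefect_le hΔ])
          (by linarith [norm_defectOperator_le x₀ hΔ g])
  · have hα : α (g * h) = α g + (π g (α h) - T g (β h)) := by
      rw [defectOperator_apply_of_coe_eq_sub_single x₀ hΔ hα1 hαstab g h _ (hβ h),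
        cocycleDefect]
      abel
    rw [hα, map_mul_of_coe_eq_sub_single hπpt hβ]
    rfl

/-- Given a transitive action of `G` on a countable set `Q`, the regular representation `π` on
`ℓ¹₀Q` (given by `(π(g)f)(q) = f(g⁻¹q)`, an isometry), the coboundary
`β(g) = δ_{x₀} − δ_{g·x₀}`, and a quasi-cocycle `α` for `π` with defect at most `Δ`, vanishing
at `1` and invariant under the stabilizer of `x₀`, there is a representation `Π` of `G` on
`ℓ¹₀Q ⊕₁ ℓ¹₀Q` by operators of norm at most `1 + Δ` for which `ζ = (α, β)` is a cocycle. -/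
theorem exists_unifBounded_rep_with_cocycle {G Q : Type*} [Group G] [Countable Q]
    [DecidableEq Q] [MulAction G Q] [MulAction.IsPretransitive G Q] (x₀ : Q)
    (π : G → (↥(l1zero Q) →L[ℝ] ↥(l1zero Q)))
    (hπ1 : π 1 = 1) (hπmul : ∀ g h : G, π (g * h) = π g ∘L π h)
    (hπpt : ∀ (g : G) (f : ↥(l1zero Q)) (q : Q),
      ((π g f : ↥(l1zero Q)) : lp (fun _ : Q => ℝ) 1) q
        = (f : lp (fun _ : Q => ℝ) 1) (g⁻¹ • q))
    (hπiso : ∀ (g : G) (f : ↥(l1zero Q)), ‖π g f‖ = ‖f‖)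
    (β : G → ↥(l1zero Q))
    (hβ : ∀ g : G, (β g : lp (fun _ : Q => ℝ) 1)
      = lp.single 1 x₀ (1 : ℝ) - lp.single 1 (g • x₀) (1 : ℝ))
    (α : G → ↥(l1zero Q)) (hα1 : α 1 = 0)
    (hαstab : ∀ g h : G, h ∈ MulAction.stabilizer G x₀ → α (g * h) = α g)
    (Δ : ℝ) (hΔ : ∀ g g' : G, ‖α (g * g') - α g - π g (α g')‖ ≤ Δ) :
    ∃ P : G → (WithLp 1 (↥(l1zero Q) × ↥(l1zero Q)) →L[ℝ]
        WithLp 1 (↥(l1zero Q) × ↥(l1zero Q))),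
      P 1 = 1 ∧ (∀ g h : G, P (g * h) = P g ∘L P h) ∧
      (∀ g : G, ‖P g‖ ≤ 1 + Δ) ∧
      (∀ g h : G,
        (WithLp.equiv 1 (↥(l1zero Q) × ↥(l1zero Q))).symm (α (g * h), β (g * h))
          = (WithLp.equiv 1 (↥(l1zero Q) × ↥(l1zero Q))).symm (α g, β g)
            + P g ((WithLp.equiv 1 (↥(l1zero Q) × ↥(l1zero Q))).symm (α h, β h))) :=
  exists_unifBounded_rep_with_cocycle_general x₀ π hπ1 hπmul hπpt hπiso β hβ α hα1 hαstab Δ hΔ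
end

section
/- Let G be a group acting transitively on a countable set Q, let x₀ ∈ Q, and let G_{x₀} be its stabilizer. Let π be the representation of G on ℓ¹₀Q given by (π(g)f)(q) = f(g⁻¹q), and suppose α : G → ℓ¹₀Q satisfies α(1) = 0, α(gh) = α(g) for all g ∈ G and h ∈ G_{x₀}, and is a quasi-cocycle for π, i.e. Δ(α) = sup_{g,g'∈G} ‖α(gg') − α(g) − π(g)α(g')‖ < ∞. Then for every g ∈ G there is a unique bounded linear operator D(g) on ℓ¹₀Q such that D(g)(δ_{x₀} − δ_{g'·x₀}) = α(gg') − α(g) − π(g)α(g') for every g' ∈ G, and it satisfies ‖D(g)‖_op ≤ Δ(α); moreover this family satisfies the Leibniz rule D(gh) = D(g)π(h) + π(g)D(h) for all g,h ∈ G. -/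
/-!
Every `f ∈ ℓ¹₀Q` is the absolutely convergent sum `f = -∑_q f(q) (δ_{x₀} − δ_q)`, so a bounded
family `q ↦ b q` with `b x₀ = 0` extends uniquely to an operator `δ_{x₀} − δ_q ↦ b q` of norm at
most `sup ‖b‖`. Stabilizer invariance of `α` makes the defect `α(gg') − α(g) − π(g)α(g')` a
function of `g'x₀`, bounded by `Δ`, which yields `D(g)`; the Leibniz rule is the cocycle identity
of the defect, checked on the generators `δ_{x₀} − δ_q`.
-/

open scoped ENNReal

section L1Lift

variable {Q E : Type*} [NormedAddCommGroup E] [NormedSpace ℝ E]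

theorem lp.hasSum_norm_one {F : Q → Type*} [∀ q, NormedAddCommGroup (F q)] (f : lp F 1) :
    HasSum (fun q => ‖f q‖) ‖f‖ := by
  simpa using lp.hasSum_norm (p := 1) (by norm_num) f

variable (c : Q → E) {C : ℝ} (hC : ∀ q, ‖c q‖ ≤ C)
include hC

theorem norm_smul_le_of_norm_le (f : lp (fun _ : Q => ℝ) 1) (q : Q) :
    ‖f q • c q‖ ≤ C * ‖f q‖ := by
  rw [norm_smul, mul_comm]
  exact mul_le_mul_of_nonneg_right (hC q) (norm_nonneg _)

variable [CompleteSpace E]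

theorem summable_smul_of_norm_le (f : lp (fun _ : Q => ℝ) 1) :
    Summable fun q => f q • c q :=
  .of_norm_bounded ((lp.hasSum_norm_one f).summable.mul_left C) (norm_smul_le_of_norm_le c hC f)

noncomputable def l1Lift : lp (fun _ : Q => ℝ) 1 →L[ℝ] E :=
  LinearMap.mkContinuous
    { toFun f := ∑' q, f q • c q
      map_add' f g := by
        simp only [lp.coeFn_add, Pi.add_apply, add_smul]
        exact (summable_smul_of_norm_le c hC f).tsum_add (summable_smul_of_norm_le c hC g)
      map_smul' r f := by
        simp only [lp.coeFn_smul, Pi.smul_apply, smul_eq_mul, mul_smul, RingHom.id_apply]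
        exact (summable_smul_of_norm_le c hC f).tsum_const_smul r }
    C fun f => tsum_of_norm_bounded ((lp.hasSum_norm_one f).mul_left C)
      (norm_smul_le_of_norm_le c hC f)

theorem l1Lift_single [DecidableEq Q] (p : Q) : l1Lift c hC (lp.single 1 p 1) = c p := by
  refine (tsum_eq_single p fun q hq => ?_).trans ?_
  · rw [lp.single_apply_ne 1 p _ hq, zero_smul]
  · rw [lp.single_apply_self, one_smul]

theorem norm_l1Lift_le (hC0 : 0 ≤ C) : ‖l1Lift c hC‖ ≤ C :=
  LinearMap.mkContinuous_norm_le _ hC0 _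

end L1Lift

namespace l1zero

variable {Q E : Type*} [NormedAddCommGroup E] [NormedSpace ℝ E]

theorem eq_ker_l1Lift_one :
    l1zero Q = (l1Lift (fun _ : Q => (1 : ℝ)) fun _ => norm_one.le).ker := by
  ext f
  simp [l1zero, l1Lift]

instance : CompleteSpace (l1zero Q) := by
  have h : IsClosed (l1zero Q : Set (lp (fun _ : Q => ℝ) 1)) := by
    rw [eq_ker_l1Lift_one]
    exact ContinuousLinearMap.isClosed_ker _
  exact h.completeSpace_coe

section Lift

variable [CompleteSpace E] (b : Q → E) {C : ℝ} (hb : ∀ q, ‖b q‖ ≤ C)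

noncomputable def lift : l1zero Q →L[ℝ] E :=
  -(l1Lift b hb).comp (l1zero Q).subtypeL

theorem norm_lift_le (hC : 0 ≤ C) : ‖lift b hb‖ ≤ C :=
  calc ‖lift b hb‖ = ‖(l1Lift b hb).comp (l1zero Q).subtypeL‖ := ContinuousLinearMap.opNorm_neg _
    _ ≤ ‖l1Lift b hb‖ * ‖(l1zero Q).subtypeL‖ := ContinuousLinearMap.opNorm_comp_le _ _
    _ ≤ C * 1 :=
      mul_le_mul (norm_l1Lift_le b hb hC) (Submodule.norm_subtypeL_le _)
        (ContinuousLinearMap.opNorm_nonneg _) hC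
    _ = C := mul_one C

end Lift

variable [DecidableEq Q]

noncomputable def diracSub (p q : Q) : l1zero Q :=
  ⟨lp.single 1 p 1 - lp.single 1 q 1, by
    simp only [eq_ker_l1Lift_one, LinearMap.mem_ker, ContinuousLinearMap.coe_coe, map_sub,
      l1Lift_single, sub_self]⟩

@[simp]
theorem coe_diracSub (p q : Q) :
    (diracSub p q : lp (fun _ : Q => ℝ) 1) = lp.single 1 p 1 - lp.single 1 q 1 :=
  rfl

theorem diracSub_eq_sub (p q r : Q) : diracSub q r = diracSub p r - diracSub p q := by
  ext1
  simp

theorem hasSum_smul_diracSub (p : Q) (f : l1zero Q) :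
    HasSum (fun q => (f : lp (fun _ : Q => ℝ) 1) q • diracSub p q) (-f) := by
  rw [← Topology.IsInducing.subtypeVal.hasSum_iff (g := (l1zero Q).subtype)]
  have hsum : ∑' q, (f : lp (fun _ : Q => ℝ) 1) q = 0 := f.2
  have h := ((l1summable (f : lp (fun _ : Q => ℝ) 1)).hasSum.smul_const
    (lp.single 1 p (1 : ℝ))).sub (lp.hasSum_single ENNReal.one_ne_top (f : lp (fun _ : Q => ℝ) 1))
  rw [hsum, zero_smul, zero_sub] at h
  convert h using 1
  · ext1 q
    simp [smul_sub, ← lp.single_smul]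
  · simp

theorem ext_diracSub (p : Q) {T₁ T₂ : l1zero Q →L[ℝ] E}
    (h : ∀ q, T₁ (diracSub p q) = T₂ (diracSub p q)) : T₁ = T₂ := by
  ext f
  have hf := hasSum_smul_diracSub p f
  have := (hf.mapL T₁).unique (by simpa only [map_smul, h] using hf.mapL T₂)
  simpa using this

theorem map_diracSub {G : Type*} [Group G] [MulAction G Q] {T : l1zero Q → l1zero Q} {k : G}
    (hT : ∀ f q, (T f : lp (fun _ : Q => ℝ) 1) q = (f : lp (fun _ : Q => ℝ) 1) (k⁻¹ • q))
    (p q : Q) : T (diracSub p q) = diracSub (k • p) (k • q) := by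
  ext r
  simp [hT, Pi.single_apply, inv_smul_eq_iff]

theorem lift_diracSub [CompleteSpace E] (b : Q → E) {C : ℝ} (hb : ∀ q, ‖b q‖ ≤ C) (p q : Q) :
    lift b hb (diracSub p q) = b q - b p := by
  simp [lift, l1Lift_single]

end l1zero

section Defect

variable {G R E : Type*} [Semiring R] [AddCommGroup E] [Module R E] [TopologicalSpace E]
  (π : G → E →L[R] E) (α : G → E)

def defect [Mul G] (g g' : G) : E :=
  α (g * g') - α g - π g (α g')

theorem defect_mul_left [Monoid G] (hπ : ∀ g h, π (g * h) = π g ∘L π h) (g h g' : G) :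
    defect π α (g * h) g' = defect π α g (h * g') - defect π α g h + π g (defect π α h g') := by
  simp only [defect, hπ, ContinuousLinearMap.comp_apply, map_sub, mul_assoc]
  abel

variable {π α} [Group G] {Q : Type*} [MulAction G Q] {x₀ : Q}
  (hα : ∀ g h, h ∈ MulAction.stabilizer G x₀ → α (g * h) = α g)
include hα

theorem defect_eq_of_smul_eq {g g₁ g₂ : G} (h : g₁ • x₀ = g₂ • x₀) :
    defect π α g g₁ = defect π α g g₂ := by
  have hstab : g₁⁻¹ * g₂ ∈ MulAction.stabilizer G x₀ := by
    rw [MulAction.mem_stabilizer_iff, mul_smul, ← h, inv_smul_smul]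
  rw [defect, defect, ← mul_inv_cancel_left g₁ g₂, ← mul_assoc, hα _ _ hstab, hα _ _ hstab]

theorem defect_eq_zero_of_smul_eq (hα1 : α 1 = 0) {g g' : G} (h : g' • x₀ = x₀) :
    defect π α g g' = 0 := by
  rw [defect_eq_of_smul_eq hα (h.trans (one_smul G x₀).symm), defect, mul_one, hα1, map_zero,
    sub_self, sub_zero]

end Defect

theorem exists_unique_bounded_derivation_general {G Q : Type*} [Group G]
    [DecidableEq Q] [MulAction G Q] [MulAction.IsPretransitive G Q] (x₀ : Q)
    (π : G → (↥(l1zero Q) →L[ℝ] ↥(l1zero Q)))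
    (hπmul : ∀ g h : G, π (g * h) = π g ∘L π h)
    (hπpt : ∀ (g : G) (f : ↥(l1zero Q)) (q : Q),
      ((π g f : ↥(l1zero Q)) : lp (fun _ : Q => ℝ) 1) q
        = (f : lp (fun _ : Q => ℝ) 1) (g⁻¹ • q))
    (α : G → ↥(l1zero Q)) (hα1 : α 1 = 0)
    (hαstab : ∀ g h : G, h ∈ MulAction.stabilizer G x₀ → α (g * h) = α g)
    (Δ : ℝ) (hΔ : ∀ g g' : G, ‖α (g * g') - α g - π g (α g')‖ ≤ Δ) :
    ∃ D : G → (↥(l1zero Q) →L[ℝ] ↥(l1zero Q)),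
      (∀ (g g' : G) (v : ↥(l1zero Q)),
        (v : lp (fun _ : Q => ℝ) 1)
            = lp.single 1 x₀ (1 : ℝ) - lp.single 1 (g' • x₀) (1 : ℝ) →
        D g v = α (g * g') - α g - π g (α g')) ∧
      (∀ g : G, ‖D g‖ ≤ Δ) ∧
      (∀ (g : G) (D' : ↥(l1zero Q) →L[ℝ] ↥(l1zero Q)),
        (∀ (g' : G) (v : ↥(l1zero Q)),
          (v : lp (fun _ : Q => ℝ) 1)
              = lp.single 1 x₀ (1 : ℝ) - lp.single 1 (g' • x₀) (1 : ℝ) →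
          D' v = α (g * g') - α g - π g (α g')) → D' = D g) ∧
      (∀ g h : G, D (g * h) = D g ∘L π h + π g ∘L D h) := by
  choose s hs using MulAction.exists_smul_eq G x₀
  have hΔ0 : 0 ≤ Δ := (norm_nonneg _).trans (hΔ 1 1)
  let D g := l1zero.lift (fun q => defect π α g (s q)) fun q => hΔ g (s q)
  have hD : ∀ g g', D g (l1zero.diracSub x₀ (g' • x₀)) = defect π α g g' := fun g g' => by
    refine (l1zero.lift_diracSub _ _ _ _).trans ?_
    rw [defect_eq_zero_of_smul_eq hαstab hα1 (hs x₀), sub_zero,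
      defect_eq_of_smul_eq hαstab (hs _)]
  have huniq : ∀ g D', (∀ g' (v : l1zero Q), (v : lp (fun _ : Q => ℝ) 1)
      = lp.single 1 x₀ 1 - lp.single 1 (g' • x₀) 1 → D' v = defect π α g g') → D' = D g :=
    fun g D' hD' => l1zero.ext_diracSub x₀ fun q => by rw [← hs q, hD' _ _ rfl, hD]
  refine ⟨D, fun g g' v hv => ?_, fun g => l1zero.norm_lift_le _ _ hΔ0, huniq,
    fun g h => (huniq _ _ fun g' v hv => ?_).symm⟩
  · obtain rfl : v = l1zero.diracSub x₀ (g' • x₀) := Subtype.ext hv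
    exact hD g g'
  · obtain rfl : v = l1zero.diracSub x₀ (g' • x₀) := Subtype.ext hv
    rw [add_apply, ContinuousLinearMap.comp_apply,
      ContinuousLinearMap.comp_apply, l1zero.map_diracSub (hπpt h), l1zero.diracSub_eq_sub x₀,
      map_sub, ← mul_smul, hD, hD, hD, defect_mul_left π α hπmul]

/-- Given a transitive action of `G` on a countable set `Q`, the regular representation `π` on
`ℓ¹₀Q` (given by `(π(g)f)(q) = f(g⁻¹q)`) and a quasi-cocycle `α` for `π` with defect at most
`Δ`, vanishing at `1` and invariant under the stabilizer of `x₀`, there is a unique family of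
bounded operators `D(g)` on `ℓ¹₀Q` with `D(g)(δ_{x₀} − δ_{g'·x₀}) = α(gg') − α(g) − π(g)α(g')`;
it satisfies `‖D(g)‖ ≤ Δ` and the Leibniz rule `D(gh) = D(g)π(h) + π(g)D(h)`. -/
theorem exists_unique_bounded_derivation {G Q : Type*} [Group G] [Countable Q]
    [DecidableEq Q] [MulAction G Q] [MulAction.IsPretransitive G Q] (x₀ : Q)
    (π : G → (↥(l1zero Q) →L[ℝ] ↥(l1zero Q)))
    (hπ1 : π 1 = 1) (hπmul : ∀ g h : G, π (g * h) = π g ∘L π h)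
    (hπpt : ∀ (g : G) (f : ↥(l1zero Q)) (q : Q),
      ((π g f : ↥(l1zero Q)) : lp (fun _ : Q => ℝ) 1) q
        = (f : lp (fun _ : Q => ℝ) 1) (g⁻¹ • q))
    (α : G → ↥(l1zero Q)) (hα1 : α 1 = 0)
    (hαstab : ∀ g h : G, h ∈ MulAction.stabilizer G x₀ → α (g * h) = α g)
    (Δ : ℝ) (hΔ : ∀ g g' : G, ‖α (g * g') - α g - π g (α g')‖ ≤ Δ) :
    ∃ D : G → (↥(l1zero Q) →L[ℝ] ↥(l1zero Q)),
      (∀ (g g' : G) (v : ↥(l1zero Q)),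
        (v : lp (fun _ : Q => ℝ) 1)
            = lp.single 1 x₀ (1 : ℝ) - lp.single 1 (g' • x₀) (1 : ℝ) →
        D g v = α (g * g') - α g - π g (α g')) ∧
      (∀ g : G, ‖D g‖ ≤ Δ) ∧
      (∀ (g : G) (D' : ↥(l1zero Q) →L[ℝ] ↥(l1zero Q)),
        (∀ (g' : G) (v : ↥(l1zero Q)),
          (v : lp (fun _ : Q => ℝ) 1)
              = lp.single 1 x₀ (1 : ℝ) - lp.single 1 (g' • x₀) (1 : ℝ) →
          D' v = α (g * g') - α g - π g (α g')) → D' = D g) ∧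
      (∀ g h : G, D (g * h) = D g ∘L π h + π g ∘L D h) :=
  exists_unique_bounded_derivation_general x₀ π hπmul hπpt α hα1 hαstab Δ hΔ
end

section
/- Let F₂ = ⟨a,b⟩, let π be the left regular representation of F₂ on ℓ¹₀F₂ given by (π(g)f)(x) = f(g⁻¹x), let e = δ₁ − δ_{a²} ∈ ℓ¹₀F₂ and w = ab, and define η(g) = ∑_{h ∈ w₊(g)} π(h)e − ∑_{h ∈ w₋(g)} π(h)e. Then for every n ≥ 1 one has w₋((ab)ⁿ) = ∅ and w₊((ab)ⁿ) = {(ab)^i : 0 ≤ i ≤ n−1}, hence η((ab)ⁿ) = ∑_{i=0}^{n−1} (δ_{(ab)^i} − δ_{(ab)^i a²}) and ‖η((ab)ⁿ)‖ = 2n; in particular η is unbounded. -/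
/-!
A point `h` lies on the geodesic from `1` to `g` in the Cayley tree exactly when the reduced word
of `h` is a prefix of that of `g`. The reduced word of `(ab)ⁿ` contains no inverse letters, so
neither do its prefixes, and appending `w = ab` to such a prefix causes no cancellation. Hence
`w₋((ab)ⁿ)` is empty, and `h ∈ w₊((ab)ⁿ)` iff `word(h) · ab` is a prefix of `abab⋯ab`, i.e.
`h = (ab)^i` with `i < n`. Then `η((ab)ⁿ)` is a signed sum of `2n` Dirac masses at distinct points,
of `ℓ¹`-norm `2n`.
-/

open scoped ENNReal

/-- The word length of an element of the free group `F₂`: the length of its reduced word. -/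
def wlen (g : FreeGroup (Fin 2)) : ℕ := g.toWord.length

/-- For `w, g ∈ F₂`, the set of `h ∈ F₂` such that `h` and `hw` both lie, in this order, on
the geodesic from `1` to `g` in the Cayley tree of `F₂`. -/
def wplus (w g : FreeGroup (Fin 2)) : Set (FreeGroup (Fin 2)) :=
  {h | wlen (h * w) = wlen h + wlen w ∧
    wlen h + wlen (h⁻¹ * g) = wlen g ∧
    wlen (h * w) + wlen ((h * w)⁻¹ * g) = wlen g}

/-- For `w, g ∈ F₂`, the set of `h ∈ F₂` such that `hw` and `h` both lie, in this order, on
the geodesic from `1` to `g` in the Cayley tree of `F₂`. -/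
def wminus (w g : FreeGroup (Fin 2)) : Set (FreeGroup (Fin 2)) :=
  {h | wlen h = wlen (h * w) + wlen w ∧
    wlen h + wlen (h⁻¹ * g) = wlen g ∧
    wlen (h * w) + wlen ((h * w)⁻¹ * g) = wlen g}

/-- The generator `a` of `F₂`. -/
def genA : FreeGroup (Fin 2) := FreeGroup.of 0

/-- The generator `b` of `F₂`. -/
def genB : FreeGroup (Fin 2) := FreeGroup.of 1

/-- The Brooks-type map `η(g) = ∑_{h ∈ w₊(g)} π(h)e − ∑_{h ∈ w₋(g)} π(h)e` associated to the
left regular representation `π` of `F₂` on `ℓ¹₀F₂`, a word `w` and a vector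
`e ∈ ℓ¹₀F₂`. -/
noncomputable def etaReg
    (π : FreeGroup (Fin 2) →
      (↥(l1zero (FreeGroup (Fin 2))) →L[ℝ] ↥(l1zero (FreeGroup (Fin 2)))))
    (w : FreeGroup (Fin 2)) (e : ↥(l1zero (FreeGroup (Fin 2))))
    (g : FreeGroup (Fin 2)) : ↥(l1zero (FreeGroup (Fin 2))) :=
  (∑ᶠ h ∈ wplus w g, π h e) - ∑ᶠ h ∈ wminus w g, π h e

open Function

namespace FreeGroup

variable {α : Type*}

theorem isReduced_of_forall_snd {L : List (α × Bool)} (hL : ∀ x ∈ L, x.2 = true) :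
    IsReduced L :=
  (List.pairwise_of_forall_mem_list (r := fun a b : α × Bool => a.1 = b.1 → a.2 = b.2)
    fun a ha b hb _ => (hL a ha).trans (hL b hb).symm).isChain

variable [DecidableEq α]

theorem norm_add_norm_inv_mul_eq_norm_iff (u g : FreeGroup α) :
    norm u + norm (u⁻¹ * g) = norm g ↔ u.toWord <+: g.toWord := by
  constructor
  · intro h
    have hsub : List.Sublist g.toWord (u.toWord ++ (u⁻¹ * g).toWord) := by
      simpa using toWord_mul_sublist u (u⁻¹ * g)
    exact ⟨_, (hsub.eq_of_length (by simpa [norm] using h.symm)).symm⟩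
  · rintro ⟨t, ht⟩
    have htoWord : (mk t).toWord = t := by
      rw [toWord_mk, ((isReduced_toWord (x := g)).infix ⟨u.toWord, [], by simp [ht]⟩).reduce_eq]
    have hmk : u⁻¹ * g = mk t := by
      rw [inv_mul_eq_iff_eq_mul, ← mk_toWord (x := u), mul_mk, ht, mk_toWord]
    simp [norm, hmk, htoWord, ← ht]

def IsPositive (g : FreeGroup α) : Prop := ∀ x ∈ g.toWord, x.2 = true

theorem isPositive_of (a : α) : (of a).IsPositive := by
  simp [IsPositive, toWord_of]

theorem IsPositive.toWord_mul {x y : FreeGroup α} (hx : x.IsPositive) (hy : y.IsPositive) :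
    (x * y).toWord = x.toWord ++ y.toWord := by
  rw [FreeGroup.toWord_mul,
    (isReduced_of_forall_snd (List.forall_mem_append.2 ⟨hx, hy⟩)).reduce_eq]

theorem IsPositive.norm_mul {x y : FreeGroup α} (hx : x.IsPositive) (hy : y.IsPositive) :
    norm (x * y) = norm x + norm y := by
  simp [norm, hx.toWord_mul hy]

theorem IsPositive.mul {x y : FreeGroup α} (hx : x.IsPositive) (hy : y.IsPositive) :
    (x * y).IsPositive := by
  intro a ha
  rw [hx.toWord_mul hy, List.mem_append] at ha
  exact ha.elim (hx a) (hy a)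

theorem IsPositive.of_isPrefix {h g : FreeGroup α} (hg : g.IsPositive)
    (hhg : h.toWord <+: g.toWord) : h.IsPositive :=
  fun x hx => hg x (hhg.subset hx)

end FreeGroup

open FreeGroup

theorem wlen_eq_norm (g : FreeGroup (Fin 2)) : wlen g = g.norm := rfl

section PositiveWords

variable {w g h : FreeGroup (Fin 2)}

theorem wminus_eq_empty_of_isPositive (hw : w.IsPositive) (hw1 : w ≠ 1) (hg : g.IsPositive) :
    wminus w g = ∅ := by
  refine Set.eq_empty_of_forall_notMem fun h ⟨hlen, hhg, _⟩ => hw1 ?_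
  have hh : h.IsPositive := hg.of_isPrefix ((norm_add_norm_inv_mul_eq_norm_iff h g).1 hhg)
  simp only [wlen_eq_norm, hh.norm_mul hw] at hlen
  exact norm_eq_zero.1 (by omega)

theorem mem_wplus_iff_of_isPositive (hw : w.IsPositive) (hg : g.IsPositive) :
    h ∈ wplus w g ↔ h.toWord ++ w.toWord <+: g.toWord := by
  simp only [wplus, Set.mem_setOf_eq, wlen_eq_norm, norm_add_norm_inv_mul_eq_norm_iff]
  constructor
  · rintro ⟨-, hhg, hhwg⟩
    rwa [(hg.of_isPrefix hhg).toWord_mul hw] at hhwg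
  · intro hhwg
    have hhg : h.toWord <+: g.toWord := (List.prefix_append _ _).trans hhwg
    have hh : h.IsPositive := hg.of_isPrefix hhg
    exact ⟨hh.norm_mul hw, hhg, by rwa [hh.toWord_mul hw]⟩

end PositiveWords

def abWord (k : ℕ) : List (Fin 2 × Bool) :=
  (List.range k).map fun j => (if Even j then 0 else 1, true)

theorem abWord_add_one (k : ℕ) :
    abWord (k + 1) = abWord k ++ [(if Even k then 0 else 1, true)] := by
  simp [abWord, List.range_succ]

theorem length_abWord (k : ℕ) : (abWord k).length = k := by
  simp [abWord]

theorem take_abWord (k m : ℕ) : (abWord m).take k = abWord (min k m) := by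
  rw [abWord, ← List.map_take, List.take_range, abWord]

theorem isPrefix_abWord_iff {L : List (Fin 2 × Bool)} {m : ℕ} :
    L <+: abWord m ↔ ∃ k ≤ m, L = abWord k := by
  rw [List.prefix_iff_eq_take, take_abWord]
  constructor
  · exact fun hL => ⟨_, min_le_right _ _, hL⟩
  · rintro ⟨k, hkm, rfl⟩
    rw [length_abWord, min_eq_left hkm]

theorem abWord_two_mul_add_two (i : ℕ) :
    abWord (2 * i + 2) = abWord (2 * i) ++ [(0, true), (1, true)] := by
  simp [abWord_add_one]

theorem append_ab_eq_abWord_iff {L : List (Fin 2 × Bool)} {k : ℕ} :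
    L ++ [(0, true), (1, true)] = abWord k ↔ ∃ i, k = 2 * i + 2 ∧ L = abWord (2 * i) := by
  constructor
  · intro hL
    have hk : k = L.length + 2 := by
      simpa [length_abWord] using (congrArg List.length hL).symm
    subst hk
    rw [abWord_add_one, abWord_add_one, List.append_assoc] at hL
    obtain ⟨hLw, hlast⟩ := List.append_inj hL (by simp [length_abWord])
    obtain ⟨i, hi⟩ : Even L.length := by by_contra hm; simp [hm] at hlast
    exact ⟨i, by omega, by rw [hLw, hi, two_mul]⟩
  · rintro ⟨i, rfl, rfl⟩
    exact (abWord_two_mul_add_two i).symm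

theorem toWord_ab : (genA * genB).toWord = [(0, true), (1, true)] := by
  rw [genA, genB, (isPositive_of _).toWord_mul (isPositive_of _), toWord_of, toWord_of]
  rfl

theorem isPositive_ab : (genA * genB).IsPositive :=
  (isPositive_of _).mul (isPositive_of _)

theorem toWord_abPow (n : ℕ) : ((genA * genB) ^ n).toWord = abWord (2 * n) := by
  induction n with
  | zero => rfl
  | succ n ih =>
    have hpos : ((genA * genB) ^ n).IsPositive := by simp [IsPositive, ih, abWord]
    rw [pow_succ, hpos.toWord_mul isPositive_ab, ih, toWord_ab, mul_add_one,
      abWord_two_mul_add_two]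

theorem isPositive_abPow (n : ℕ) : ((genA * genB) ^ n).IsPositive := by
  simp [IsPositive, toWord_abPow, abWord]

theorem norm_abPow (n : ℕ) : FreeGroup.norm ((genA * genB) ^ n) = 2 * n := by
  rw [FreeGroup.norm, toWord_abPow, length_abWord]

theorem wminus_ab_abPow_eq_empty (n : ℕ) : wminus (genA * genB) ((genA * genB) ^ n) = ∅ := by
  refine wminus_eq_empty_of_isPositive isPositive_ab (fun h => ?_) (isPositive_abPow n)
  simpa [h] using toWord_ab

theorem wplus_ab_abPow_eq (n : ℕ) :
    wplus (genA * genB) ((genA * genB) ^ n) = {h | ∃ i < n, h = (genA * genB) ^ i} := by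
  ext h
  rw [mem_wplus_iff_of_isPositive isPositive_ab (isPositive_abPow n), toWord_ab, toWord_abPow,
    isPrefix_abWord_iff]
  simp only [append_ab_eq_abWord_iff, ← toWord_abPow, toWord_inj, Set.mem_setOf_eq]
  constructor
  · rintro ⟨_, hk, i, rfl, rfl⟩
    exact ⟨i, by omega, rfl⟩
  · rintro ⟨i, hi, rfl⟩
    exact ⟨2 * i + 2, by omega, i, rfl, rfl⟩

theorem injective_abPow : Injective fun i : ℕ => (genA * genB) ^ i := fun i j hij => by
  have := congrArg FreeGroup.norm hij
  simp only [norm_abPow] at this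
  omega

theorem injective_sumElim_abPow :
    Injective (Sum.elim (fun i : ℕ => (genA * genB) ^ i)
      fun i => (genA * genB) ^ i * (genA * genA)) := by
  refine injective_abPow.sumElim (fun i j hij => injective_abPow (mul_right_cancel hij))
    fun i j hij => ?_
  have haa : (genA * genA).IsPositive := (isPositive_of _).mul (isPositive_of _)
  have hnorm_aa : FreeGroup.norm (genA * genA) = 2 := by
    rw [genA, (isPositive_of _).norm_mul (isPositive_of _), norm_of]
  have hlen := congrArg FreeGroup.norm hij
  simp only [(isPositive_abPow j).norm_mul haa, hnorm_aa, norm_abPow] at hlen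
  obtain rfl : i = j + 1 := by omega
  rw [pow_succ, mul_right_inj, mul_right_inj] at hij
  exact absurd (of_injective hij) (by decide)

namespace lp

variable {α ι : Type*} [DecidableEq α]

theorem norm_sum_single_of_injective {p : ι → α} (hp : Injective p) (s : Finset ι) (c : ι → ℝ) :
    ‖(∑ i ∈ s, lp.single 1 (p i) (c i) : lp (fun _ : α => ℝ) 1)‖ = ∑ i ∈ s, |c i| := by
  have key := lp.norm_sum_single (E := fun _ : α => ℝ) (p := 1) (by norm_num)
    (extend p c 0) (s.map ⟨p, hp⟩)
  simpa [Finset.sum_map, hp.extend_apply] using key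

theorem norm_sum_single_sub_single {u v : ι → α} (huv : Injective (Sum.elim u v))
    (s : Finset ι) :
    ‖(∑ i ∈ s, (lp.single 1 (u i) 1 - lp.single 1 (v i) 1) : lp (fun _ : α => ℝ) 1)‖ =
      2 * s.card := by
  have hsum : (∑ i ∈ s, (lp.single 1 (u i) 1 - lp.single 1 (v i) 1) : lp (fun _ : α => ℝ) 1)
      = ∑ j ∈ s.disjSum s, lp.single 1 (Sum.elim u v j) (Sum.elim 1 (-1) j : ℝ) := by
    rw [Finset.sum_disjSum, Finset.sum_sub_distrib, sub_eq_add_neg, ← Finset.sum_neg_distrib]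
    simp [lp.single_neg]
  rw [hsum, norm_sum_single_of_injective huv]
  simp [Finset.sum_disjSum]
  ring

end lp

theorem coe_apply_eq_single_sub_single {G : Type*} [Group G] [DecidableEq G]
    (π : G → (l1zero G →L[ℝ] l1zero G))
    (hπ : ∀ (g : G) (f : l1zero G) (x : G),
      (π g f : lp (fun _ : G => ℝ) 1) x = (f : lp (fun _ : G => ℝ) 1) (g⁻¹ * x))
    {e : l1zero G} {c : G}
    (he : (e : lp (fun _ : G => ℝ) 1) = lp.single 1 1 1 - lp.single 1 c 1)
    (h : G) :
    (π h e : lp (fun _ : G => ℝ) 1) = lp.single 1 h 1 - lp.single 1 (h * c) 1 := by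
  ext x
  simp [hπ, he, lp.single_apply, Pi.single_apply, inv_mul_eq_iff_eq_mul]

theorem etaReg_on_ab_pows_general
    (π : FreeGroup (Fin 2) →
      (↥(l1zero (FreeGroup (Fin 2))) →L[ℝ] ↥(l1zero (FreeGroup (Fin 2)))))
    (hπpt : ∀ (g : FreeGroup (Fin 2)) (f : ↥(l1zero (FreeGroup (Fin 2))))
      (x : FreeGroup (Fin 2)),
      ((π g f : ↥(l1zero (FreeGroup (Fin 2)))) : lp (fun _ : FreeGroup (Fin 2) => ℝ) 1) x
        = (f : lp (fun _ : FreeGroup (Fin 2) => ℝ) 1) (g⁻¹ * x))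
    (e : ↥(l1zero (FreeGroup (Fin 2))))
    (he : (e : lp (fun _ : FreeGroup (Fin 2) => ℝ) 1)
      = lp.single 1 (1 : FreeGroup (Fin 2)) (1 : ℝ) - lp.single 1 (genA * genA) (1 : ℝ))
    (n : ℕ) :
    wminus (genA * genB) ((genA * genB) ^ n) = ∅ ∧
    wplus (genA * genB) ((genA * genB) ^ n)
      = {h | ∃ i : ℕ, i < n ∧ h = (genA * genB) ^ i} ∧
    ((etaReg π (genA * genB) e ((genA * genB) ^ n) :
        ↥(l1zero (FreeGroup (Fin 2)))) : lp (fun _ : FreeGroup (Fin 2) => ℝ) 1)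
      = ∑ i ∈ Finset.range n,
          (lp.single 1 ((genA * genB) ^ i) (1 : ℝ)
            - lp.single 1 ((genA * genB) ^ i * (genA * genA)) (1 : ℝ)) ∧
    ‖etaReg π (genA * genB) e ((genA * genB) ^ n)‖ = 2 * (n : ℝ) := by
  have hset : {h | ∃ i < n, h = (genA * genB) ^ i}
      = ((Finset.range n).image fun i => (genA * genB) ^ i : Set (FreeGroup (Fin 2))) := by
    ext h
    simp [eq_comm]
  have hη : ((etaReg π (genA * genB) e ((genA * genB) ^ n) : l1zero (FreeGroup (Fin 2))) :
        lp (fun _ : FreeGroup (Fin 2) => ℝ) 1)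
      = ∑ i ∈ Finset.range n, (lp.single 1 ((genA * genB) ^ i) (1 : ℝ)
            - lp.single 1 ((genA * genB) ^ i * (genA * genA)) (1 : ℝ)) := by
    rw [etaReg, wminus_ab_abPow_eq_empty, finsum_mem_empty, sub_zero, wplus_ab_abPow_eq, hset,
      finsum_mem_coe_finset, Finset.sum_image injective_abPow.injOn,
      Submodule.coe_sum]
    exact Finset.sum_congr rfl fun i _ => coe_apply_eq_single_sub_single π hπpt he _
  refine ⟨wminus_ab_abPow_eq_empty n, wplus_ab_abPow_eq n, hη, ?_⟩
  rw [Submodule.coe_norm, hη, lp.norm_sum_single_sub_single injective_sumElim_abPow,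
    Finset.card_range]

/-- For the left regular representation `π` of `F₂` on `ℓ¹₀F₂`, the vector
`e = δ₁ − δ_{a²}` and the word `w = ab`, for every `n ≥ 1` one has `w₋((ab)ⁿ) = ∅` and
`w₊((ab)ⁿ) = {(ab)^i : 0 ≤ i ≤ n−1}`, hence
`η((ab)ⁿ) = ∑_{i=0}^{n−1} (δ_{(ab)^i} − δ_{(ab)^i a²})` and `‖η((ab)ⁿ)‖ = 2n`;
in particular `η` is unbounded. -/
theorem etaReg_on_ab_pows
    (π : FreeGroup (Fin 2) →
      (↥(l1zero (FreeGroup (Fin 2))) →L[ℝ] ↥(l1zero (FreeGroup (Fin 2)))))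
    (hπpt : ∀ (g : FreeGroup (Fin 2)) (f : ↥(l1zero (FreeGroup (Fin 2))))
      (x : FreeGroup (Fin 2)),
      ((π g f : ↥(l1zero (FreeGroup (Fin 2)))) : lp (fun _ : FreeGroup (Fin 2) => ℝ) 1) x
        = (f : lp (fun _ : FreeGroup (Fin 2) => ℝ) 1) (g⁻¹ * x))
    (e : ↥(l1zero (FreeGroup (Fin 2))))
    (he : (e : lp (fun _ : FreeGroup (Fin 2) => ℝ) 1)
      = lp.single 1 (1 : FreeGroup (Fin 2)) (1 : ℝ) - lp.single 1 (genA * genA) (1 : ℝ))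
    (n : ℕ) (hn : 1 ≤ n) :
    wminus (genA * genB) ((genA * genB) ^ n) = ∅ ∧
    wplus (genA * genB) ((genA * genB) ^ n)
      = {h | ∃ i : ℕ, i < n ∧ h = (genA * genB) ^ i} ∧
    ((etaReg π (genA * genB) e ((genA * genB) ^ n) :
        ↥(l1zero (FreeGroup (Fin 2)))) : lp (fun _ : FreeGroup (Fin 2) => ℝ) 1)
      = ∑ i ∈ Finset.range n,
          (lp.single 1 ((genA * genB) ^ i) (1 : ℝ)
            - lp.single 1 ((genA * genB) ^ i * (genA * genA)) (1 : ℝ)) ∧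
    ‖etaReg π (genA * genB) e ((genA * genB) ^ n)‖ = 2 * (n : ℝ) :=
  etaReg_on_ab_pows_general π hπpt e he n
end
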